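/- arXiv:2110.13200 — 2 statements merged into one kernel-verified Lean document; each statement's English description precedes it below -/
import Mathlib

section
/- Suppose the Gram matrix K_S^H K_S is invertible. Then for every vector r lying in the column space of K_S and every index j ∉ S, one has |⟨k_j, r⟩| ≤ M · max_{i∈S} |⟨k_i, r⟩|, where M := max_{l∉S} ‖(K_S^H K_S)^{-1} K_S^H k_l‖₁. -/
open Matrix Finset

noncomputable section

/-- The Hermitian inner product `⟨u,v⟩ = ∑ l, conj (u l) * v l` on `ℂ^L`. -/
def ipC {L : ℕ} (u v : Fin L → ℂ) : ℂ := ∑ l, star (u l) * v l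

/-- The `j`-th column `k_j` of the dictionary `K`. -/
def col {L N : ℕ} (K : Matrix (Fin L) (Fin N) ℂ) (j : Fin N) : Fin L → ℂ := fun l => K l j

/-- The submatrix `K_S` of the columns of `K` indexed by `S`. -/
def subMat {L N : ℕ} (K : Matrix (Fin L) (Fin N) ℂ) (S : Finset (Fin N)) :
    Matrix (Fin L) {j : Fin N // j ∈ S} ℂ := Matrix.of fun l j => K l j.1

/-- The Gram matrix `K_Sᴴ K_S`. -/
def gram {L N : ℕ} (K : Matrix (Fin L) (Fin N) ℂ) (S : Finset (Fin N)) :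
    Matrix {j : Fin N // j ∈ S} {j : Fin N // j ∈ S} ℂ := (subMat K S)ᴴ * subMat K S

/-- The vector `(K_Sᴴ K_S)⁻¹ K_Sᴴ k_j`. -/
def ercVec {L N : ℕ} (K : Matrix (Fin L) (Fin N) ℂ) (S : Finset (Fin N)) (j : Fin N) :
    {i : Fin N // i ∈ S} → ℂ := ((gram K S)⁻¹ * (subMat K S)ᴴ) *ᵥ _root_.col K j

/-- The ℓ1 norm of a complex vector, as a real number. -/
def l1 {ι : Type} [Fintype ι] (v : ι → ℂ) : ℝ := ∑ i, ‖v i‖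

/-- The ℓ1 norm of a complex vector, as a nonnegative real number. -/
def l1n {ι : Type} [Fintype ι] (v : ι → ℂ) : NNReal := ∑ i, ‖v i‖₊

/-!
Write `w := K_S† k_j` and `r = K_S c`. Because `K_S^H K_S` is Hermitian,
`⟨k_j, r⟩ = (K_S^H k_j)^H c = (K_S^H K_S w)^H c = w^H (K_S^H r)`, and the entries of `K_S^H r` are
the `⟨k_i, r⟩`, `i ∈ S`. So `⟨k_j, r⟩ = ∑_{i ∈ S} conj(w_i) ⟨k_i, r⟩`, and the triangle inequality
bounds it by `‖w‖₁ · max_{i ∈ S} |⟨k_i, r⟩| ≤ M · max_{i ∈ S} |⟨k_i, r⟩|`.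
-/

namespace Matrix

variable {R : Type*} {m n : Type*} [Fintype m] [Fintype n] [DecidableEq n]

/-- The paper's `A†`; junk unless `Aᴴ * A` is invertible, since `⁻¹` of a singular matrix is `0`. -/
def pinv [CommRing R] [StarRing R] (A : Matrix m n R) : Matrix n m R := (Aᴴ * A)⁻¹ * Aᴴ

theorem star_dotProduct_mulVec_eq_star_pinv_mulVec_dotProduct [CommRing R] [StarRing R]
    (A : Matrix m n R) (hA : IsUnit (Aᴴ * A)) (u : m → R) (c : n → R) :
    star u ⬝ᵥ (A *ᵥ c) = star (pinv A *ᵥ u) ⬝ᵥ (Aᴴ *ᵥ (A *ᵥ c)) := by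
  have hdet : IsUnit (Aᴴ * A).det := (isUnit_iff_isUnit_det _).mp hA
  have hgram : (Aᴴ * A) *ᵥ (pinv A *ᵥ u) = Aᴴ *ᵥ u := by
    rw [pinv, mulVec_mulVec, ← Matrix.mul_assoc, mul_nonsing_inv _ hdet, Matrix.one_mul]
  calc star u ⬝ᵥ (A *ᵥ c)
      = star (Aᴴ *ᵥ u) ⬝ᵥ c := by
        rw [star_mulVec, conjTranspose_conjTranspose, dotProduct_mulVec]
    _ = star ((Aᴴ * A) *ᵥ (pinv A *ᵥ u)) ⬝ᵥ c := by rw [hgram]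
    _ = star (pinv A *ᵥ u) ⬝ᵥ (Aᴴ *ᵥ (A *ᵥ c)) := by
        rw [star_mulVec, (isHermitian_conjTranspose_mul_self A).eq, ← dotProduct_mulVec,
          mulVec_mulVec]

end Matrix

theorem norm_star_dotProduct_le {R ι : Type*} [Fintype ι] [SeminormedRing R] [StarRing R]
    [NormedStarGroup R] (w v : ι → R) {B : ℝ} (hv : ∀ i, ‖v i‖ ≤ B) :
    ‖star w ⬝ᵥ v‖ ≤ (∑ i, ‖w i‖) * B := by
  calc ‖star w ⬝ᵥ v‖ ≤ ∑ i, ‖star (w i) * v i‖ := norm_sum_le _ _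
    _ ≤ ∑ i, ‖w i‖ * B := by
        gcongr with i
        exact (norm_mul_le _ _).trans (by rw [norm_star]; gcongr; exact hv i)
    _ = (∑ i, ‖w i‖) * B := (Finset.sum_mul _ _ _).symm

theorem ipC_eq_star_dotProduct {L : ℕ} (u v : Fin L → ℂ) : ipC u v = star u ⬝ᵥ v := rfl

theorem conjTranspose_subMat_mulVec_apply {L N : ℕ} (K : Matrix (Fin L) (Fin N) ℂ)
    (S : Finset (Fin N)) (r : Fin L → ℂ) (i : {i : Fin N // i ∈ S}) :
    ((subMat K S)ᴴ *ᵥ r) i = ipC (_root_.col K i) r := by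
  simp [mulVec, dotProduct, ipC, subMat, _root_.col]

theorem ercVec_eq_pinv_mulVec {L N : ℕ} (K : Matrix (Fin L) (Fin N) ℂ) (S : Finset (Fin N))
    (j : Fin N) : ercVec K S j = pinv (subMat K S) *ᵥ _root_.col K j := rfl

theorem coe_l1n {ι : Type} [Fintype ι] (v : ι → ℂ) : (l1n v : ℝ) = ∑ i, ‖v i‖ := by
  simp only [l1n, NNReal.coe_sum, coe_nnnorm]

theorem l1_ercVec_le_sup {L N : ℕ} (K : Matrix (Fin L) (Fin N) ℂ) (S : Finset (Fin N))
    {j : Fin N} (hj : j ∉ S) :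
    ∑ i, ‖ercVec K S j i‖ ≤ ((Sᶜ.sup fun l => l1n (ercVec K S l) : NNReal) : ℝ) := by
  rw [← coe_l1n]
  exact_mod_cast Finset.le_sup (f := fun l => l1n (ercVec K S l)) (Finset.mem_compl.mpr hj)

theorem stmt1_general (L N : ℕ)
    (K : Matrix (Fin L) (Fin N) ℂ)
    (S : Finset (Fin N))
    (hinv : IsUnit (gram K S))
    (M : ℝ) (hM : M = ((Sᶜ.sup fun l => l1n (ercVec K S l) : NNReal) : ℝ))
    (r : Fin L → ℂ) (hr : ∃ c : {i : Fin N // i ∈ S} → ℂ, r = subMat K S *ᵥ c)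
    (j : Fin N) (hj : j ∉ S) :
    ‖ipC (_root_.col K j) r‖ ≤ M * ((S.sup fun i => ‖ipC (_root_.col K i) r‖₊ : NNReal) : ℝ) := by
  obtain ⟨c, rfl⟩ := hr
  have hexpand : ipC (_root_.col K j) (subMat K S *ᵥ c)
      = star (ercVec K S j) ⬝ᵥ ((subMat K S)ᴴ *ᵥ (subMat K S *ᵥ c)) := by
    rw [ipC_eq_star_dotProduct, ercVec_eq_pinv_mulVec]
    exact star_dotProduct_mulVec_eq_star_pinv_mulVec_dotProduct _ hinv _ _
  have hentry_le : ∀ i : {i : Fin N // i ∈ S}, ‖((subMat K S)ᴴ *ᵥ (subMat K S *ᵥ c)) i‖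
      ≤ ((S.sup fun i => ‖ipC (_root_.col K i) (subMat K S *ᵥ c)‖₊ : NNReal) : ℝ) := by
    intro i
    rw [conjTranspose_subMat_mulVec_apply]
    exact_mod_cast Finset.le_sup
      (f := fun i => ‖ipC (_root_.col K i) (subMat K S *ᵥ c)‖₊) i.2
  rw [hexpand, hM]
  exact (norm_star_dotProduct_le _ _ hentry_le).trans
    (by gcongr; exact l1_ercVec_le_sup K S hj)

/-- key OMP step of Lemma 1: if `K_Sᴴ K_S` is invertible then, for
every `r` in the column space of `K_S` and every `j ∉ S`,
`|⟨k_j, r⟩| ≤ M · max_{i ∈ S} |⟨k_i, r⟩|`, where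
`M = max_{l ∉ S} ‖(K_Sᴴ K_S)⁻¹ K_Sᴴ k_l‖₁`. -/
theorem stmt1 (L N : ℕ) (hL : 1 ≤ L) (hN : 1 ≤ N)
    (K : Matrix (Fin L) (Fin N) ℂ)
    (hunit : ∀ j : Fin N, ∑ l, ‖K l j‖ ^ 2 = 1)
    (S : Finset (Fin N))
    (hinv : IsUnit (gram K S))
    (M : ℝ) (hM : M = ((Sᶜ.sup fun l => l1n (ercVec K S l) : NNReal) : ℝ))
    (r : Fin L → ℂ) (hr : ∃ c : {i : Fin N // i ∈ S} → ℂ, r = subMat K S *ᵥ c)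
    (j : Fin N) (hj : j ∉ S) :
    ‖ipC (_root_.col K j) r‖ ≤ M * ((S.sup fun i => ‖ipC (_root_.col K i) r‖₊ : NNReal) : ℝ) :=
  stmt1_general L N K S hinv M hM r hr j hj
end
end

section
/- Suppose the intra-coherence of S satisfies ν_S < 1. Then the Gram matrix K_S^H K_S is invertible and for every index j ∉ S, ‖(K_S^H K_S)^{-1} K_S^H k_j‖₁ ≤ ζ_S/(1 − ν_S); that is, the exact-recovery constant of the support set S is at most ζ_S/(1 − ν_S). -/
open Matrix Finset

noncomputable section

/-! The Gram matrix `G = K_Sᴴ K_S` has unit diagonal, and since `G` is Hermitian its off-diagonal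
column sums are the row sums bounded by `ν_S < 1`; so `G` is invertible by Gershgorin. For
`x = G⁻¹ K_Sᴴ k_j`, splitting `x = G x - (G - 1) x` gives `‖x‖₁ ≤ ‖K_Sᴴ k_j‖₁ + ν_S ‖x‖₁`, and
`‖K_Sᴴ k_j‖₁ ≤ ζ_S` because `j ∉ S`. -/

theorem Matrix.one_sub_mul_sum_norm_le_sum_norm_mulVec {ι 𝕜 : Type*} [Fintype ι] [DecidableEq ι]
    [NormedRing 𝕜] {A : Matrix ι ι 𝕜} {ν : ℝ} (hdiag : ∀ i, A i i = 1)
    (hcol : ∀ m, ∑ i ∈ univ.erase m, ‖A i m‖ ≤ ν) (x : ι → 𝕜) :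
    (1 - ν) * ∑ i, ‖x i‖ ≤ ∑ i, ‖(A *ᵥ x) i‖ := by
  have hrow : ∀ i, ‖x i‖ ≤ ‖(A *ᵥ x) i‖ + ∑ m ∈ univ.erase i, ‖A i m‖ * ‖x m‖ := by
    intro i
    have hsplit : (A *ᵥ x) i = x i + ∑ m ∈ univ.erase i, A i m * x m := by
      rw [mulVec, dotProduct, ← add_sum_erase _ _ (mem_univ i), hdiag, one_mul]
    calc ‖x i‖ = ‖(A *ᵥ x) i - ∑ m ∈ univ.erase i, A i m * x m‖ := by
          rw [hsplit, add_sub_cancel_right]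
      _ ≤ ‖(A *ᵥ x) i‖ + ∑ m ∈ univ.erase i, ‖A i m * x m‖ :=
          (norm_sub_le _ _).trans (add_le_add_right (norm_sum_le _ _) _)
      _ ≤ ‖(A *ᵥ x) i‖ + ∑ m ∈ univ.erase i, ‖A i m‖ * ‖x m‖ := by
          gcongr with m; exact norm_mul_le _ _
  have hswap : ∑ i, ∑ m ∈ univ.erase i, ‖A i m‖ * ‖x m‖ ≤ ν * ∑ m, ‖x m‖ := by
    calc ∑ i, ∑ m ∈ univ.erase i, ‖A i m‖ * ‖x m‖
        = ∑ m, (∑ i ∈ univ.erase m, ‖A i m‖) * ‖x m‖ := by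
          simp only [sum_erase_eq_sub (mem_univ _), sum_mul, sub_mul]
          rw [sum_sub_distrib, sum_sub_distrib, sum_comm]
      _ ≤ ∑ m, ν * ‖x m‖ := by gcongr with m; exact hcol m
      _ = ν * ∑ m, ‖x m‖ := (mul_sum _ _ _).symm
  have hsum := sum_le_sum fun i (_ : i ∈ univ) => hrow i
  rw [sum_add_distrib] at hsum
  linarith

theorem ipC_comm {L : ℕ} (u v : Fin L → ℂ) : ipC v u = star (ipC u v) := by
  simp only [ipC, star_sum, star_mul', star_star, mul_comm]

theorem norm_ipC_comm {L : ℕ} (u v : Fin L → ℂ) : ‖ipC v u‖ = ‖ipC u v‖ := by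
  rw [ipC_comm, norm_star]

section Gram

variable {L N : ℕ} (K : Matrix (Fin L) (Fin N) ℂ) (S : Finset (Fin N))

theorem ipC_col_self {j : Fin N} (hj : ∑ l, ‖K l j‖ ^ 2 = 1) :
    ipC (_root_.col K j) (_root_.col K j) = 1 := by
  simp only [ipC, _root_.col, RCLike.star_def, Complex.conj_mul', ← Complex.ofReal_pow,
    ← Complex.ofReal_sum, hj, Complex.ofReal_one]

theorem gram_apply (i m : {j : Fin N // j ∈ S}) :
    gram K S i m = ipC (_root_.col K i) (_root_.col K m) := by
  simp [_root_.gram, subMat, ipC, _root_.col, mul_apply]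

theorem conjTranspose_subMat_mulVec_col (j : Fin N) (i : {j : Fin N // j ∈ S}) :
    ((subMat K S)ᴴ *ᵥ _root_.col K j) i = ipC (_root_.col K i) (_root_.col K j) := by
  simp [subMat, ipC, _root_.col, mulVec, dotProduct]

theorem gram_mulVec_ercVec (hG : IsUnit (gram K S)) (j : Fin N) :
    gram K S *ᵥ ercVec K S j = (subMat K S)ᴴ *ᵥ _root_.col K j := by
  rw [ercVec, mulVec_mulVec, ← Matrix.mul_assoc, mul_nonsing_inv _ ((isUnit_iff_isUnit_det _).1 hG),
    Matrix.one_mul]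

theorem sum_erase_norm_gram_le (m : {j : Fin N // j ∈ S}) :
    ∑ i ∈ univ.erase m, ‖gram K S i m‖ ≤
      ((S.sup fun i => ∑ j ∈ S.erase i, ‖ipC (_root_.col K i) (_root_.col K j)‖₊ : NNReal) : ℝ) := by
  let f : Fin N → ℝ := fun i => ‖ipC (_root_.col K m) (_root_.col K i)‖
  have hsum : ∑ i ∈ univ.erase m, ‖gram K S i m‖ = ∑ i ∈ S.erase m, f i := by
    simp only [gram_apply, norm_ipC_comm]
    rw [sum_erase_eq_sub (mem_univ m), sum_erase_eq_sub m.2, sum_coe_sort S f]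
  rw [hsum]
  simpa only [NNReal.coe_sum, coe_nnnorm] using NNReal.coe_le_coe.2
    (le_sup (f := fun i => ∑ j ∈ S.erase i, ‖ipC (_root_.col K i) (_root_.col K j)‖₊) m.2)

theorem l1_conjTranspose_subMat_mulVec_col_le {j : Fin N} (hj : j ∉ S) :
    l1 ((subMat K S)ᴴ *ᵥ _root_.col K j) ≤
      ((Sᶜ.sup fun i => ∑ j ∈ S, ‖ipC (_root_.col K i) (_root_.col K j)‖₊ : NNReal) : ℝ) := by
  have hsum : l1 ((subMat K S)ᴴ *ᵥ _root_.col K j) =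
      ∑ i ∈ S, ‖ipC (_root_.col K j) (_root_.col K i)‖ := by
    simp only [l1, conjTranspose_subMat_mulVec_col, norm_ipC_comm]
    exact sum_coe_sort S fun i => ‖ipC (_root_.col K j) (_root_.col K i)‖
  rw [hsum]
  simpa only [NNReal.coe_sum, coe_nnnorm] using NNReal.coe_le_coe.2
    (le_sup (f := fun i => ∑ j ∈ S, ‖ipC (_root_.col K i) (_root_.col K j)‖₊) (mem_compl.2 hj))

end Gram

theorem stmt4_general (L N : ℕ)
    (K : Matrix (Fin L) (Fin N) ℂ)
    (hunit : ∀ j : Fin N, ∑ l, ‖K l j‖ ^ 2 = 1)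
    (S : Finset (Fin N))
    (ζ : ℝ)
    (hζ : ζ = ((Sᶜ.sup fun i => ∑ j ∈ S, ‖ipC (_root_.col K i) (_root_.col K j)‖₊ : NNReal) : ℝ))
    (ν : ℝ)
    (hν : ν = ((S.sup fun i => ∑ j ∈ S.erase i, ‖ipC (_root_.col K i) (_root_.col K j)‖₊ : NNReal) : ℝ))
    (hν1 : ν < 1) :
    IsUnit (gram K S) ∧
    ∀ j ∉ S, l1 (ercVec K S j) ≤ ζ / (1 - ν) := by
  have hdiag : ∀ i, gram K S i i = 1 := fun i => by rw [gram_apply, ipC_col_self K (hunit i)]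
  have hcol : ∀ m, ∑ i ∈ univ.erase m, ‖gram K S i m‖ ≤ ν :=
    fun m => hν ▸ sum_erase_norm_gram_le K S m
  have hG : IsUnit (gram K S) := (isUnit_iff_isUnit_det _).2 <| isUnit_iff_ne_zero.2 <|
    det_ne_zero_of_sum_col_lt_diag fun m => by simpa [hdiag] using (hcol m).trans_lt hν1
  refine ⟨hG, fun j hj => ?_⟩
  rw [le_div_iff₀ (sub_pos.2 hν1), mul_comm]
  calc (1 - ν) * l1 (ercVec K S j) ≤ l1 (gram K S *ᵥ ercVec K S j) :=
        one_sub_mul_sum_norm_le_sum_norm_mulVec hdiag hcol _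
    _ = l1 ((subMat K S)ᴴ *ᵥ _root_.col K j) := by rw [gram_mulVec_ercVec K S hG]
    _ ≤ ζ := hζ ▸ l1_conjTranspose_subMat_mulVec_col_le K S hj

/-- equation (32), the main intermediate bound of Theorem 1: if the
intra-coherence `ν_S < 1`, then `K_Sᴴ K_S` is invertible and for every `j ∉ S`,
`‖(K_Sᴴ K_S)⁻¹ K_Sᴴ k_j‖₁ ≤ ζ_S / (1 - ν_S)`, where
`ζ_S = max_{i ∉ S} ∑_{j ∈ S} |⟨k_i, k_j⟩|` is the inter-coherence. -/
theorem stmt4 (L N : ℕ) (hL : 1 ≤ L) (hN : 1 ≤ N)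
    (K : Matrix (Fin L) (Fin N) ℂ)
    (hunit : ∀ j : Fin N, ∑ l, ‖K l j‖ ^ 2 = 1)
    (S : Finset (Fin N))
    (ζ : ℝ)
    (hζ : ζ = ((Sᶜ.sup fun i => ∑ j ∈ S, ‖ipC (_root_.col K i) (_root_.col K j)‖₊ : NNReal) : ℝ))
    (ν : ℝ)
    (hν : ν = ((S.sup fun i => ∑ j ∈ S.erase i, ‖ipC (_root_.col K i) (_root_.col K j)‖₊ : NNReal) : ℝ))
    (hν1 : ν < 1) :
    IsUnit (gram K S) ∧
    ∀ j ∉ S, l1 (ercVec K S j) ≤ ζ / (1 - ν) :=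
  stmt4_general L N K hunit S ζ hζ ν hν hν1
end
end
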